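/- arXiv:math/0105075 — 4 statements merged into one kernel-verified Lean document; each statement's English description precedes it below -/
import Mathlib

section
/- Let A be an m×n real matrix, H an n×n real matrix, v ∈ ℝ^m and w ∈ ℝ^n vectors such that the scalar δ = w ⬝ᵥ (H *ᵥ (Aᵀ *ᵥ v)) is nonzero, and let H' = H - (1/δ) • vecMulVec (H *ᵥ (Aᵀ *ᵥ v)) (Hᵀ *ᵥ w) be the scaled ABS update of H. Then H' *ᵥ (Aᵀ *ᵥ v) = 0 and H'ᵀ *ᵥ w = 0. -/
/-! The update subtracts from `H` the rank-one matrix `δ⁻¹ (H u)(Hᵀ w)ᵀ`, which agrees with `H`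
on `u` from the right and on `w` from the left, because both `(Hᵀ w) ⬝ u` and `w ⬝ (H u)` equal
`δ`. Transposing swaps the roles of `(H, u, w)` and `(Hᵀ, w, u)`, so the second identity is the
first one for the transposed data. -/

open Matrix

namespace Matrix

variable {K n : Type*} [Field K] [Fintype n]

/-- The scaled ABS update of `H`, written for the vector `u = Aᵀ v`. -/
def absUpdate (H : Matrix n n K) (u w : n → K) : Matrix n n K :=
  H - (1 / (w ⬝ᵥ (H *ᵥ u))) • vecMulVec (H *ᵥ u) (Hᵀ *ᵥ w)

theorem transpose_absUpdate (H : Matrix n n K) (u w : n → K) :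
    (absUpdate H u w)ᵀ = absUpdate Hᵀ w u := by
  rw [absUpdate, absUpdate, transpose_sub, transpose_smul, transpose_vecMulVec,
    transpose_transpose, dotProduct_transpose_mulVec]

theorem absUpdate_mulVec (H : Matrix n n K) (u w : n → K) (hδ : w ⬝ᵥ (H *ᵥ u) ≠ 0) :
    absUpdate H u w *ᵥ u = 0 := by
  rw [absUpdate, sub_mulVec, smul_mulVec, vecMulVec_mulVec, op_smul_eq_smul,
    dotProduct_comm _ u, dotProduct_transpose_mulVec, smul_smul,
    one_div_mul_cancel hδ, one_smul, sub_self]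

theorem transpose_absUpdate_mulVec (H : Matrix n n K) (u w : n → K)
    (hδ : w ⬝ᵥ (H *ᵥ u) ≠ 0) : (absUpdate H u w)ᵀ *ᵥ w = 0 := by
  rw [transpose_absUpdate]
  exact absUpdate_mulVec Hᵀ w u (by rwa [dotProduct_transpose_mulVec])

end Matrix

theorem abs_update_annihilates {m n : ℕ}
    (A : Matrix (Fin m) (Fin n) ℝ) (H : Matrix (Fin n) (Fin n) ℝ)
    (v : Fin m → ℝ) (w : Fin n → ℝ)
    (hδ : w ⬝ᵥ (H *ᵥ (Aᵀ *ᵥ v)) ≠ 0)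
    (H' : Matrix (Fin n) (Fin n) ℝ)
    (hH' : H' = H - (1 / (w ⬝ᵥ (H *ᵥ (Aᵀ *ᵥ v)))) •
      vecMulVec (H *ᵥ (Aᵀ *ᵥ v)) (Hᵀ *ᵥ w)) :
    H' *ᵥ (Aᵀ *ᵥ v) = 0 ∧ H'ᵀ *ᵥ w = 0 := by
  subst hH'
  exact ⟨absUpdate_mulVec H _ w hδ, transpose_absUpdate_mulVec H _ w hδ⟩
end

section
/- Let a : ℕ → ℝ^n and let H : ℕ → (n×n real matrices) and p : ℕ → ℝ^n satisfy the Huang recursion: H 1 = I, and for every k with 1 ≤ k ≤ i, p k = H k *ᵥ (a k), (a k) ⬝ᵥ (p k) ≠ 0, and H (k+1) = H k - (1/((a k) ⬝ᵥ (p k))) • vecMulVec (p k) (p k). Then for every k with 1 ≤ k ≤ i, the search vector p k lies in the span of {a 1, …, a k}. -/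
open Matrix

/-
Every matrix of the recursion is a perturbation of the identity by the search directions found so
far: `H k *ᵥ v - v ∈ span {a 1, …, a (k-1)}` for all `v`. This holds for `H 1 = I`, and a rank-one
update along `p k` preserves it (with `k` shifted) once `p k ∈ span {a 1, …, a k}`, which in turn
follows from the invariant since `p k = (H k *ᵥ a k - a k) + a k`.
-/

section RankOneUpdate

variable {R ι : Type*} [CommRing R] [Fintype ι] {S : Submodule R (ι → R)} {H : Matrix ι ι R}

lemma mulVec_mem_of_forall_mulVec_sub_mem (hH : ∀ v, H *ᵥ v - v ∈ S) {v : ι → R} (hv : v ∈ S) :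
    H *ᵥ v ∈ S := by
  simpa using S.add_mem (hH v) hv

lemma sub_smul_vecMulVec_mulVec_sub_mem (hH : ∀ v, H *ᵥ v - v ∈ S) {p : ι → R} (hp : p ∈ S)
    (c : R) (q v : ι → R) : (H - c • vecMulVec p q) *ᵥ v - v ∈ S := by
  have hsplit : (H - c • vecMulVec p q) *ᵥ v - v = (H *ᵥ v - v) - (c * (q ⬝ᵥ v)) • p := by
    rw [sub_mulVec, smul_mulVec, vecMulVec_mulVec, op_smul_eq_smul, smul_smul]
    abel
  rw [hsplit]
  exact S.sub_mem (hH v) (S.smul_mem _ hp)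

end RankOneUpdate

lemma rankOneUpdate_mulVec_sub_mem_span {R ι : Type*} [CommRing R] [Fintype ι] [DecidableEq ι]
    (i : ℕ) (a : ℕ → ι → R) (H : ℕ → Matrix ι ι R) (p q : ℕ → ι → R) (c : ℕ → R) (hH1 : H 1 = 1)
    (hrec : ∀ k, 1 ≤ k → k ≤ i →
      p k = H k *ᵥ a k ∧ H (k + 1) = H k - c k • vecMulVec (p k) (q k)) :
    ∀ k, 1 ≤ k → k ≤ i + 1 → ∀ v, H k *ᵥ v - v ∈ Submodule.span R (a '' Set.Ico 1 k) := by
  intro k hk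
  induction k, hk using Nat.le_induction with
  | base => simp [hH1]
  | succ k hk ih =>
    intro hki v
    obtain ⟨hp, hH⟩ := hrec k hk (by omega)
    have hmono :
        Submodule.span R (a '' Set.Ico 1 k) ≤ Submodule.span R (a '' Set.Ico 1 (k + 1)) :=
      Submodule.span_mono (Set.image_mono (Set.Ico_subset_Ico_right k.le_succ))
    have hak : a k ∈ Submodule.span R (a '' Set.Ico 1 (k + 1)) :=
      Submodule.subset_span ⟨k, ⟨hk, k.lt_succ_self⟩, rfl⟩
    have hinv : ∀ v, H k *ᵥ v - v ∈ Submodule.span R (a '' Set.Ico 1 (k + 1)) :=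
      fun v ↦ hmono (ih (by omega) v)
    rw [hH]
    refine sub_smul_vecMulVec_mulVec_sub_mem hinv ?_ _ _ _
    rw [hp]
    exact mulVec_mem_of_forall_mulVec_sub_mem hinv hak

theorem huang_search_vector_in_span {n : ℕ} (i : ℕ)
    (a : ℕ → Fin n → ℝ)
    (H : ℕ → Matrix (Fin n) (Fin n) ℝ) (p : ℕ → Fin n → ℝ)
    (hH1 : H 1 = 1)
    (hrec : ∀ k, 1 ≤ k → k ≤ i →
      p k = H k *ᵥ a k ∧ a k ⬝ᵥ p k ≠ 0 ∧
      H (k + 1) = H k - (1 / (a k ⬝ᵥ p k)) • vecMulVec (p k) (p k)) :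
    ∀ k, 1 ≤ k → k ≤ i →
      p k ∈ Submodule.span ℝ (a '' Set.Icc 1 k) := by
  have hinv := rankOneUpdate_mulVec_sub_mem_span i a H p p (fun k ↦ 1 / (a k ⬝ᵥ p k)) hH1
    fun k hk hki ↦ ⟨(hrec k hk hki).1, (hrec k hk hki).2.2⟩
  intro k hk hki
  have hspan : Submodule.span ℝ (a '' Set.Ico 1 k) ≤ Submodule.span ℝ (a '' Set.Icc 1 k) :=
    Submodule.span_mono (Set.image_mono Set.Ico_subset_Icc_self)
  rw [(hrec k hk hki).1]
  exact mulVec_mem_of_forall_mulVec_sub_mem (fun v ↦ hspan (hinv k hk (by omega) v))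
    (Submodule.subset_span ⟨k, ⟨hk, le_rfl⟩, rfl⟩)
end

section
/- Let a : ℕ → ℝ^n and let H : ℕ → (n×n real matrices) and p : ℕ → ℝ^n satisfy the Huang recursion: H 1 = I, and for every k with 1 ≤ k ≤ i, p k = H k *ᵥ (a k), (a k) ⬝ᵥ (p k) ≠ 0, and H (k+1) = H k - (1/((a k) ⬝ᵥ (p k))) • vecMulVec (p k) (p k). Then the search vectors are mutually orthogonal: (p j) ⬝ᵥ (p k) = 0 for all 1 ≤ j < k ≤ i. -/
/-!
Each `H k` is a symmetric idempotent matrix that annihilates the earlier search vectors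
`p 1, …, p (k-1)`: the update subtracts from the projection `H k` the rank-one projection
`(1 / (p k ⬝ᵥ p k)) • vecMulVec (p k) (p k)` onto `p k`, which lies in the range of `H k`
(and `p k ⬝ᵥ p k = a k ⬝ᵥ p k`), so the difference is again a projection, now also killing `p k`.
Orthogonality follows from `p j ⬝ᵥ H k *ᵥ a k = (H k *ᵥ p j) ⬝ᵥ a k = 0`.
-/

open Matrix

namespace Matrix

section CommSemiring

variable {R m : Type*} [CommSemiring R] [Fintype m] {P : Matrix m m R}

theorem IsSymm.vecMul_eq_mulVec (hP : P.IsSymm) (x : m → R) :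
    x ᵥ* P = P *ᵥ x := by
  conv_lhs => rw [← hP.eq]
  exact vecMul_transpose P x

theorem IsSymm.dotProduct_mulVec_comm (hP : P.IsSymm) (x y : m → R) :
    x ⬝ᵥ P *ᵥ y = P *ᵥ x ⬝ᵥ y := by
  rw [dotProduct_mulVec, hP.vecMul_eq_mulVec]

theorem IsIdempotentElem.mulVec_mulVec_self (hP : IsIdempotentElem P) (a : m → R) :
    P *ᵥ (P *ᵥ a) = P *ᵥ a := by
  rw [mulVec_mulVec, hP.eq]

theorem dotProduct_mulVec_self_of_isSymm (hP : P.IsSymm) (hP' : IsIdempotentElem P)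
    (a : m → R) : P *ᵥ a ⬝ᵥ P *ᵥ a = a ⬝ᵥ P *ᵥ a := by
  rw [← hP.dotProduct_mulVec_comm, hP'.mulVec_mulVec_self]

end CommSemiring

variable {K m : Type*} [Field K] [Fintype m]

theorem isIdempotentElem_smul_vecMulVec {u v : m → K} (h : v ⬝ᵥ u ≠ 0) :
    IsIdempotentElem ((1 / (v ⬝ᵥ u)) • vecMulVec u v) := by
  rw [IsIdempotentElem, smul_mul_smul_comm, vecMulVec_mul_vecMulVec, vecMulVec_smul, smul_smul]
  congr 1
  field_simp

noncomputable def huangUpdate (P : Matrix m m K) (a : m → K) : Matrix m m K :=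
  P - (1 / (a ⬝ᵥ P *ᵥ a)) • vecMulVec (P *ᵥ a) (P *ᵥ a)

section huangUpdate

variable {P : Matrix m m K}

theorem IsSymm.huangUpdate (hP : P.IsSymm) (a : m → K) : (huangUpdate P a).IsSymm :=
  hP.sub (IsSymm.smul (transpose_vecMulVec _ _) _)

theorem IsIdempotentElem.huangUpdate (hP : P.IsSymm) (hP' : IsIdempotentElem P) {a : m → K}
    (ha : a ⬝ᵥ P *ᵥ a ≠ 0) : IsIdempotentElem (huangUpdate P a) := by
  have hpp := dotProduct_mulVec_self_of_isSymm hP hP' a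
  have hQ := isIdempotentElem_smul_vecMulVec (u := P *ᵥ a) (hpp ▸ ha)
  rw [hpp] at hQ
  refine hQ.sub hP' ?_ ?_
  · rw [smul_mul_assoc, vecMulVec_mul, hP.vecMul_eq_mulVec, hP'.mulVec_mulVec_self]
  · rw [mul_smul_comm, mul_vecMulVec, hP'.mulVec_mulVec_self]

theorem huangUpdate_mulVec (P : Matrix m m K) (a x : m → K) :
    huangUpdate P a *ᵥ x = P *ᵥ x - (1 / (a ⬝ᵥ P *ᵥ a) * (P *ᵥ a ⬝ᵥ x)) • P *ᵥ a := by
  rw [huangUpdate, sub_mulVec, smul_mulVec, vecMulVec_mulVec, op_smul_eq_smul, smul_smul]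

theorem huangUpdate_mulVec_self (hP : P.IsSymm) (hP' : IsIdempotentElem P) {a : m → K}
    (ha : a ⬝ᵥ P *ᵥ a ≠ 0) : huangUpdate P a *ᵥ (P *ᵥ a) = 0 := by
  rw [huangUpdate_mulVec, hP'.mulVec_mulVec_self, dotProduct_mulVec_self_of_isSymm hP hP',
    one_div, inv_mul_cancel₀ ha, one_smul, sub_self]

theorem huangUpdate_mulVec_of_mulVec_eq_zero (hP : P.IsSymm) (a : m → K) {x : m → K}
    (hx : P *ᵥ x = 0) : huangUpdate P a *ᵥ x = 0 := by
  rw [huangUpdate_mulVec, ← hP.dotProduct_mulVec_comm, hx, dotProduct_zero, mul_zero, zero_smul,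
    sub_zero]

end huangUpdate

end Matrix

theorem huang_projection_invariant {K m : Type*} [Field K] [Fintype m] [DecidableEq m] (i : ℕ)
    (a : ℕ → m → K) (H : ℕ → Matrix m m K) (p : ℕ → m → K) (hH1 : H 1 = 1)
    (hrec : ∀ k, 1 ≤ k → k ≤ i →
      p k = H k *ᵥ a k ∧ a k ⬝ᵥ p k ≠ 0 ∧
      H (k + 1) = H k - (1 / (a k ⬝ᵥ p k)) • vecMulVec (p k) (p k)) :
    ∀ k, 1 ≤ k → k ≤ i + 1 →
      (H k).IsSymm ∧ IsIdempotentElem (H k) ∧ ∀ j, 1 ≤ j → j < k → H k *ᵥ p j = 0 := by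
  intro k hk
  induction k, hk using Nat.le_induction with
  | base => exact fun _ ↦ ⟨hH1 ▸ isSymm_one, hH1 ▸ IsIdempotentElem.one, fun j hj hj1 ↦ by omega⟩
  | succ k hk ih =>
    intro hki
    obtain ⟨hsymm, hidem, hkill⟩ := ih (by omega)
    obtain ⟨hp, hc, hnext⟩ := hrec k hk (by omega)
    rw [hp] at hc hnext
    have hupdate : H (k + 1) = huangUpdate (H k) (a k) := hnext
    refine ⟨hupdate ▸ hsymm.huangUpdate _, hupdate ▸ hidem.huangUpdate hsymm hc,
      fun j hj hjk ↦ ?_⟩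
    rw [hupdate]
    rcases Nat.lt_succ_iff_lt_or_eq.mp hjk with hjk | rfl
    · exact huangUpdate_mulVec_of_mulVec_eq_zero hsymm _ (hkill j hj hjk)
    · rw [hp]
      exact huangUpdate_mulVec_self hsymm hidem hc

theorem huang_search_vectors_orthogonal {n : ℕ} (i : ℕ)
    (a : ℕ → Fin n → ℝ)
    (H : ℕ → Matrix (Fin n) (Fin n) ℝ) (p : ℕ → Fin n → ℝ)
    (hH1 : H 1 = 1)
    (hrec : ∀ k, 1 ≤ k → k ≤ i →
      p k = H k *ᵥ a k ∧ a k ⬝ᵥ p k ≠ 0 ∧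
      H (k + 1) = H k - (1 / (a k ⬝ᵥ p k)) • vecMulVec (p k) (p k)) :
    ∀ j k, 1 ≤ j → j < k → k ≤ i → p j ⬝ᵥ p k = 0 := by
  intro j k hj hjk hki
  obtain ⟨hsymm, -, hkill⟩ := huang_projection_invariant i a H p hH1 hrec k (by omega) (by omega)
  rw [(hrec k (by omega) hki).1, hsymm.dotProduct_mulVec_comm, hkill j hj hjk, zero_dotProduct]
end

section
/- Let A be an m×n real matrix with rows a 1, …, a m and b ∈ ℝ^m. Let H : ℕ → (n×n real matrices), p : ℕ → ℝ^n and x : ℕ → ℝ^n satisfy the Huang algorithm: H 1 = I, x 1 = 0, and for every k with 1 ≤ k ≤ m: p k = H k *ᵥ (a k), (a k) ⬝ᵥ (p k) ≠ 0, x (k+1) = x k - (((a k) ⬝ᵥ (x k) - b k)/((a k) ⬝ᵥ (p k))) • p k, and H (k+1) = H k - (1/((a k) ⬝ᵥ (p k))) • vecMulVec (p k) (p k). If A *ᵥ (x (m+1)) = b, then x (m+1) is the minimum-norm solution: for every y ∈ ℝ^n with A *ᵥ y = b, (x (m+1)) ⬝ᵥ (x (m+1)) ≤ y ⬝ᵥ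 y. -/
/-!
Every iterate of the Huang algorithm stays in the row space of `A`: `x 1 = 0`, the matrices `H k`
differ from the identity by a map into the row space, hence so do the directions `p k = H k a k`,
and each step moves `x` along such a direction. A solution of `A x = b` lying in the row space is
orthogonal to the kernel of `A`, which contains the difference to any other solution, so by
Pythagoras it has the least norm.
-/

open Matrix Submodule

section RowSpace

variable {R : Type*} {l n : Type*} [Fintype l] [Fintype n]

theorem dotProduct_self_le_of_mem_span_row [CommRing R] [LinearOrder R] [IsStrictOrderedRing R]
    (A : Matrix l n R) {x y : n → R} (hx : x ∈ span R (Set.range A.row))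
    (hxy : A *ᵥ x = A *ᵥ y) : x ⬝ᵥ x ≤ y ⬝ᵥ y := by
  rw [← range_vecMulLinear] at hx
  obtain ⟨w, rfl : w ᵥ* A = x⟩ := hx
  set z := y - w ᵥ* A
  have hAz : A *ᵥ z = 0 := by rw [mulVec_sub, hxy, sub_self]
  have horth : w ᵥ* A ⬝ᵥ z = 0 := by
    rw [← dotProduct_mulVec, hAz, dotProduct_zero]
  have hzz : 0 ≤ z ⬝ᵥ z := Fintype.sum_nonneg fun i => mul_self_nonneg (z i)
  have hy : y = w ᵥ* A + z := (add_sub_cancel _ _).symm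
  rw [hy, add_dotProduct, dotProduct_add, dotProduct_add, dotProduct_comm z, horth]
  linarith

theorem mulVec_mem_of_mulVec_sub_self_mem [CommRing R] {S : Submodule R (n → R)}
    {H : Matrix n n R} (hH : ∀ v, H *ᵥ v - v ∈ S) {a : n → R} (ha : a ∈ S) : H *ᵥ a ∈ S := by
  simpa using S.add_mem (hH a) ha

theorem mulVec_sub_self_mem_of_sub_smul_vecMulVec [CommRing R] {S : Submodule R (n → R)}
    {H : Matrix n n R} (hH : ∀ v, H *ᵥ v - v ∈ S) {p : n → R} (hp : p ∈ S) (d : R) (v : n → R) :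
    (H - d • vecMulVec p p) *ᵥ v - v ∈ S := by
  have hrankOne : (H - d • vecMulVec p p) *ᵥ v - v = (H *ᵥ v - v) - (d * (p ⬝ᵥ v)) • p := by
    rw [sub_mulVec, smul_mulVec, vecMulVec_mulVec, op_smul_eq_smul, smul_smul]
    abel
  rw [hrankOne]
  exact S.sub_mem (hH v) (S.smul_mem _ hp)

end RowSpace

theorem huang_iterate_mem {R n : Type*} [CommRing R] [Fintype n] [DecidableEq n] {m : ℕ}
    {S : Submodule R (n → R)} {H : ℕ → Matrix n n R} {p x a : ℕ → n → R} (c d : ℕ → R)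
    (hH1 : H 1 = 1) (hx1 : x 1 = 0) (ha : ∀ k, 1 ≤ k → k ≤ m → a k ∈ S)
    (hrec : ∀ k, 1 ≤ k → k ≤ m →
      p k = H k *ᵥ a k ∧ x (k + 1) = x k - c k • p k ∧
      H (k + 1) = H k - d k • vecMulVec (p k) (p k)) :
    ∀ k, 1 ≤ k → k ≤ m + 1 → x k ∈ S ∧ ∀ v, H k *ᵥ v - v ∈ S := by
  intro k hk
  induction k, hk using Nat.le_induction with
  | base => simp [hH1, hx1]
  | succ k hk ih =>
    intro hkm
    obtain ⟨hxS, hHS⟩ := ih (by omega)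
    obtain ⟨hp, hx, hH⟩ := hrec k hk (by omega)
    have hpS : p k ∈ S := hp ▸ mulVec_mem_of_mulVec_sub_self_mem hHS (ha k hk (by omega))
    refine ⟨hx ▸ S.sub_mem hxS (S.smul_mem _ hpS), fun v => ?_⟩
    rw [hH]
    exact mulVec_sub_self_mem_of_sub_smul_vecMulVec hHS hpS _ v

theorem huang_gives_minimum_norm_solution_general {m n : ℕ}
    (A : Matrix (Fin m) (Fin n) ℝ) (b : Fin m → ℝ)
    (H : ℕ → Matrix (Fin n) (Fin n) ℝ)
    (p : ℕ → Fin n → ℝ) (x : ℕ → Fin n → ℝ)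
    (hH1 : H 1 = 1) (hx1 : x 1 = 0)
    (a : ℕ → Fin n → ℝ) (ha : ∀ k : Fin m, a (k.1 + 1) = A k)
    (β : ℕ → ℝ)
    (hrec : ∀ k, 1 ≤ k → k ≤ m →
      p k = H k *ᵥ a k ∧ a k ⬝ᵥ p k ≠ 0 ∧
      x (k + 1) = x k - ((a k ⬝ᵥ x k - β k) / (a k ⬝ᵥ p k)) • p k ∧
      H (k + 1) = H k - (1 / (a k ⬝ᵥ p k)) • vecMulVec (p k) (p k))
    (hsol : A *ᵥ x (m + 1) = b) :
    ∀ y : Fin n → ℝ, A *ᵥ y = b →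
      x (m + 1) ⬝ᵥ x (m + 1) ≤ y ⬝ᵥ y := by
  intro y hy
  have ha_row : ∀ k, 1 ≤ k → k ≤ m → a k ∈ span ℝ (Set.range A.row) := by
    intro k hk hkm
    obtain ⟨j, rfl⟩ : ∃ j, k = j + 1 := ⟨k - 1, by omega⟩
    rw [ha ⟨j, by omega⟩]
    exact subset_span ⟨_, rfl⟩
  have hx_row := huang_iterate_mem (fun k => (a k ⬝ᵥ x k - β k) / (a k ⬝ᵥ p k))
    (fun k => 1 / (a k ⬝ᵥ p k)) hH1 hx1 ha_row
    (fun k hk hkm => (hrec k hk hkm).imp_right And.right) (m + 1) (by omega) le_rfl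
  exact dotProduct_self_le_of_mem_span_row A hx_row.1 (hsol.trans hy.symm)

theorem huang_gives_minimum_norm_solution {m n : ℕ}
    (A : Matrix (Fin m) (Fin n) ℝ) (b : Fin m → ℝ)
    (H : ℕ → Matrix (Fin n) (Fin n) ℝ)
    (p : ℕ → Fin n → ℝ) (x : ℕ → Fin n → ℝ)
    (hH1 : H 1 = 1) (hx1 : x 1 = 0)
    (a : ℕ → Fin n → ℝ) (ha : ∀ k : Fin m, a (k.1 + 1) = A k)
    (β : ℕ → ℝ) (hβ : ∀ k : Fin m, β (k.1 + 1) = b k)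
    (hrec : ∀ k, 1 ≤ k → k ≤ m →
      p k = H k *ᵥ a k ∧ a k ⬝ᵥ p k ≠ 0 ∧
      x (k + 1) = x k - ((a k ⬝ᵥ x k - β k) / (a k ⬝ᵥ p k)) • p k ∧
      H (k + 1) = H k - (1 / (a k ⬝ᵥ p k)) • vecMulVec (p k) (p k))
    (hsol : A *ᵥ x (m + 1) = b) :
    ∀ y : Fin n → ℝ, A *ᵥ y = b →
      x (m + 1) ⬝ᵥ x (m + 1) ≤ y ⬝ᵥ y :=
  huang_gives_minimum_norm_solution_general A b H p x hH1 hx1 a ha β hrec hsol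
end
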